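/- Let G be a linearly ordered abelian group. The following are equivalent: (1) G is regular, i.e., for every integer n ≥ 1, every closed interval [a, b] of G containing at least n elements contains an element of nG; (2) for every integer n ≥ 1, every g ∈ G, and every convex subgroup H of G with H ≠ {0}, the coset g + H intersects nG, i.e., there exists h ∈ H with g + h ∈ nG. (Condition (2) says that for all n and g, the spine subgroup H_n(g) — the largest convex subgroup H with (g + H) ∩ nG = ∅ — is trivial.) -/

import Mathlib

/-!
For (1) ⇒ (2): if `0 < e ∈ H`, the interval `[g, g + n • e]` contains the `n` points
`g + i • e`, hence a point of `nG`, and convexity puts its difference with `g` into `H`.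

For (2) ⇒ (1): let `[a, b]` contain `n ≥ 2` points, so that `(n - 1) • δ ≤ b - a` for their
least gap `δ > 0`. Applying (2) to the convex subgroup of elements whose archimedean class is at
least that of some `c > 0` gives `a + h ∈ nG` with `h` bounded by a multiple of `c`; subtracting
multiples of `n • c ∈ nG` moves `h` into `[0, n • c)`. If some `c > 0` has `n • c ≤ b - a` this
finishes the proof. Otherwise `δ` is the least positive element of `G`, and `h < n • δ` forces
`h ≤ (n - 1) • δ`.
-/

def IsConvexSubgroup {G : Type*} [AddCommGroup G] [LinearOrder G] [IsOrderedAddMonoid G] (H : AddSubgroup G) : Prop :=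
  ∀ a ∈ H, ∀ b ∈ H, ∀ c : G, a ≤ c → c ≤ b → c ∈ H

section

variable {G : Type*} [AddCommGroup G] [LinearOrder G] [IsOrderedAddMonoid G]

theorem AddSubgroup.exists_pos_mem_of_ne_bot {H : AddSubgroup G} (hH : H ≠ ⊥) :
    ∃ e ∈ H, 0 < e := by
  obtain ⟨⟨e, heH⟩, he⟩ := AddSubgroup.ne_bot_iff_exists_ne_zero.mp hH
  exact ⟨|e|, abs_mem_iff.mpr heH, abs_pos.mpr (by simpa using he)⟩

theorem exists_card_eq_subset_Icc_add_nsmul (g : G) {e : G} (he : 0 < e) (n : ℕ) :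
    ∃ s : Finset G, s.card = n ∧ ↑s ⊆ Set.Icc g (g + n • e) := by
  have hmono : StrictMono fun i : ℕ => g + i • e := fun i j hij =>
    add_lt_add_right (nsmul_lt_nsmul_left he hij) g
  refine ⟨(Finset.range n).image fun i => g + i • e, ?_, ?_⟩
  · rw [Finset.card_image_of_injective _ hmono.injective, Finset.card_range]
  · intro x hx
    obtain ⟨i, hi, rfl⟩ := by simpa using hx
    exact ⟨le_add_of_nonneg_right (nsmul_nonneg he.le i),
      add_le_add_right (nsmul_le_nsmul_left he.le hi.le) g⟩

theorem exists_pos_succ_nsmul_le_sub_of_card {k : ℕ} {s : Finset G} (hs : s.card = k + 2)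
    {a b : G} (hsub : ↑s ⊆ Set.Icc a b) : ∃ δ, 0 < δ ∧ (k + 1) • δ ≤ b - a := by
  classical
  induction k generalizing s b with
  | zero =>
    obtain ⟨x, y, hxy, rfl⟩ := Finset.card_eq_two.mp hs
    have hx := hsub (Finset.mem_insert_self x {y})
    have hy := hsub (Finset.mem_insert_of_mem (Finset.mem_singleton_self y))
    exact ⟨|x - y|, abs_pos.mpr (sub_ne_zero.mpr hxy), by
      simpa using abs_sub_le_of_le_of_le hx.1 hx.2 hy.1 hy.2⟩
  | succ k ih =>
    have hne : s.Nonempty := Finset.card_pos.mp (by omega)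
    set m := s.max' hne
    have hcard : (s.erase m).card = k + 2 := by
      rw [Finset.card_erase_of_mem (s.max'_mem hne), hs]; rfl
    have hne' : (s.erase m).Nonempty := Finset.card_pos.mp (by omega)
    set m' := (s.erase m).max' hne'
    have hm' : m' < m := by
      have := (s.erase m).max'_mem hne'
      exact lt_of_le_of_ne (s.le_max' _ (Finset.mem_of_mem_erase this))
        (Finset.ne_of_mem_erase this)
    have hsub' : ↑(s.erase m) ⊆ Set.Icc a m' := fun x hx =>
      ⟨(hsub (Finset.mem_of_mem_erase hx)).1, (s.erase m).le_max' x hx⟩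
    obtain ⟨δ, hδ, hkδ⟩ := ih hcard hsub'
    refine ⟨min δ (m - m'), lt_min hδ (sub_pos.mpr hm'), ?_⟩
    calc (k + 1 + 1) • min δ (m - m') = (k + 1) • min δ (m - m') + min δ (m - m') :=
          succ_nsmul _ _
      _ ≤ (k + 1) • δ + (m - m') :=
          add_le_add (nsmul_le_nsmul_right (min_le_left _ _) _) (min_le_right _ _)
      _ ≤ (m' - a) + (m - m') := by gcongr
      _ = m - a := by abel
      _ ≤ b - a := sub_le_sub_right (hsub (s.max'_mem hne)).2 a

namespace ArchimedeanClass

theorem isConvexSubgroup_closedBallAddSubgroup (c : ArchimedeanClass G) :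
    IsConvexSubgroup c.closedBallAddSubgroup := by
  intro p hp q hq x hpx hxq
  rw [mem_closedBallAddSubgroup_iff] at *
  exact (le_min hp hq).trans (min_le_mk_of_le_of_le hpx hxq)

theorem exists_add_zsmul_mem_Ico {e h : G} (he : 0 < e) (hh : mk e ≤ mk h) :
    ∃ m : ℤ, h + m • e ∈ Set.Ico 0 e := by
  obtain ⟨K, hK⟩ := mk_le_mk.mp hh
  rw [abs_of_pos he] at hK
  have hbdd : ∀ m : ℤ, 0 ≤ h + m • e → -(K : ℤ) ≤ m := by
    intro m hm
    by_contra! hlt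
    have : h + m • e ≤ -e :=
      calc h + m • e ≤ (K : ℤ) • e + m • e := by
            rw [natCast_zsmul]; exact add_le_add_left (le_of_abs_le hK) _
        _ = (K + m : ℤ) • e := (add_zsmul _ _ _).symm
        _ ≤ (-1 : ℤ) • e := zsmul_le_zsmul_left he.le (by omega)
        _ = -e := neg_one_zsmul e
    exact (neg_neg_iff_pos.mpr he).not_ge (hm.trans this)
  have hK0 : 0 ≤ h + (K : ℤ) • e := by
    rw [natCast_zsmul]; exact neg_le_iff_add_nonneg.mp (neg_le_of_abs_le hK)
  obtain ⟨m, hm, hleast⟩ := Int.exists_least_of_bdd ⟨_, hbdd⟩ ⟨_, hK0⟩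
  refine ⟨m, hm, ?_⟩
  by_contra! hge
  have := hleast (m - 1) <| by
    rw [sub_one_zsmul, ← sub_eq_add_neg, ← add_sub_assoc, sub_nonneg]
    exact hge
  omega

theorem closedBallAddSubgroup_mk_ne_bot {c : G} (hc : c ≠ 0) :
    (mk c).closedBallAddSubgroup ≠ ⊥ := by
  intro hbot
  have hmem : c ∈ (mk c).closedBallAddSubgroup := mem_closedBallAddSubgroup_iff.mpr le_rfl
  rw [hbot, AddSubgroup.mem_bot] at hmem
  exact hc hmem

theorem exists_mem_Ico_nsmul_add_eq_nsmul {n : ℕ} (hn : n ≠ 0) {a c : G} (hc : 0 < c)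
    (hsp : ∃ h ∈ (mk c).closedBallAddSubgroup, ∃ y, a + h = n • y) :
    ∃ h ∈ Set.Ico 0 (n • c), ∃ y, a + h = n • y := by
  obtain ⟨h, hh, y, hy⟩ := hsp
  have hnc : mk (n • c) ≤ mk h :=
    (mk_le_mk_of_abs (by rw [abs_nsmul]; exact le_self_nsmul (abs_nonneg c) hn)).trans
      (mem_closedBallAddSubgroup_iff.mp hh)
  obtain ⟨m, hm⟩ := exists_add_zsmul_mem_Ico (nsmul_pos hc hn) hnc
  refine ⟨_, hm, y + m • c, ?_⟩
  rw [smul_add, ← hy, smul_comm, add_assoc]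

end ArchimedeanClass

theorem le_of_pos_of_forall_lt_nsmul {k : ℕ} {d δ : G} (hδ : (k + 1) • δ ≤ d)
    (hd : ∀ c, 0 < c → d < (k + 2) • c) {x : G} (hx : 0 < x) : δ ≤ x := by
  by_contra! hxδ
  have hsplit : (k + 2) • δ = (k + 2) • x + (k + 2) • (δ - x) := by
    rw [← smul_add, add_sub_cancel]
  have hδ2 : (k + 2) • δ ≤ (k + 1) • δ + (k + 1) • δ := by
    rw [← add_nsmul]; exact nsmul_le_nsmul_left (hx.trans hxδ).le (by omega)
  have := add_lt_add (hd x hx) (hd (δ - x) (sub_pos.mpr hxδ))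
  rw [← hsplit] at this
  exact (this.trans_le hδ2).not_ge (add_le_add hδ hδ)

theorem exists_mem_Icc_sub_add_eq_nsmul {k : ℕ} {s : Finset G} (hs : s.card = k + 2) {a b : G}
    (hsub : ↑s ⊆ Set.Icc a b)
    (hsp : ∀ H : AddSubgroup G, IsConvexSubgroup H → H ≠ ⊥ →
      ∃ h ∈ H, ∃ y, a + h = (k + 2) • y) :
    ∃ h ∈ Set.Icc 0 (b - a), ∃ y, a + h = (k + 2) • y := by
  have hstep : ∀ c, 0 < c → ∃ h ∈ Set.Ico 0 ((k + 2) • c), ∃ y, a + h = (k + 2) • y :=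
    fun c hc => ArchimedeanClass.exists_mem_Ico_nsmul_add_eq_nsmul (by omega) hc <| hsp _
      (ArchimedeanClass.isConvexSubgroup_closedBallAddSubgroup _)
      (ArchimedeanClass.closedBallAddSubgroup_mk_ne_bot hc.ne')
  obtain ⟨δ, hδ, hkδ⟩ := exists_pos_succ_nsmul_le_sub_of_card hs hsub
  by_cases hsmall : ∃ c, 0 < c ∧ (k + 2) • c ≤ b - a
  · obtain ⟨c, hc, hcd⟩ := hsmall
    obtain ⟨h, hh, y, hy⟩ := hstep c hc
    exact ⟨h, ⟨hh.1, hh.2.le.trans hcd⟩, y, hy⟩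
  · push Not at hsmall
    obtain ⟨h, hh, y, hy⟩ := hstep δ hδ
    have hgap := le_of_pos_of_forall_lt_nsmul hkδ hsmall (sub_pos.mpr hh.2)
    rw [le_sub_comm, succ_nsmul, add_sub_cancel_right] at hgap
    exact ⟨h, ⟨hh.1, hgap.trans hkδ⟩, y, hy⟩

end

/-- A linearly ordered abelian group `G` is regular (every closed interval with at least
`n` elements meets `nG`) if and only if for every `n ≥ 1`, every `g ∈ G` and every
non-trivial convex subgroup `H`, the coset `g + H` meets `nG` (i.e. every spine subgroup
`H_n(g)` is trivial). -/
theorem regular_iff_trivial_spine (G : Type*) [AddCommGroup G] [LinearOrder G] [IsOrderedAddMonoid G] :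
    (∀ n : ℕ, 1 ≤ n → ∀ a b : G,
        (∃ s : Finset G, s.card = n ∧ ↑s ⊆ Set.Icc a b) →
        ∃ x ∈ Set.Icc a b, ∃ y : G, x = n • y) ↔
    (∀ n : ℕ, 1 ≤ n → ∀ g : G, ∀ H : AddSubgroup G,
        IsConvexSubgroup H → H ≠ ⊥ → ∃ h ∈ H, ∃ y : G, g + h = n • y) := by
  constructor
  · intro hreg n hn g H hH hne
    obtain ⟨e, heH, he⟩ := AddSubgroup.exists_pos_mem_of_ne_bot hne
    obtain ⟨x, hx, y, rfl⟩ :=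
      hreg n hn g (g + n • e) (exists_card_eq_subset_Icc_add_nsmul g he n)
    refine ⟨n • y - g, ?_, y, add_sub_cancel g _⟩
    exact hH 0 H.zero_mem (n • e) (H.nsmul_mem heH n) _ (sub_nonneg.mpr hx.1)
      (sub_le_iff_le_add'.mpr hx.2)
  · rintro hsp n hn a b ⟨s, hs, hsub⟩
    suffices ∃ h ∈ Set.Icc 0 (b - a), ∃ y, a + h = n • y by
      obtain ⟨h, hh, y, hy⟩ := this
      exact ⟨a + h, Set.add_mem_Icc_iff_right.mpr (by rwa [sub_self]), y, hy⟩
    rcases Nat.lt_or_ge n 2 with hn2 | hn2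
    · obtain rfl : n = 1 := by omega
      obtain ⟨x, hx⟩ := Finset.card_pos.mp (by omega : 0 < s.card)
      exact ⟨0, ⟨le_rfl, sub_nonneg.mpr ((hsub hx).1.trans (hsub hx).2)⟩, a, by simp⟩
    · obtain ⟨k, rfl⟩ := Nat.exists_eq_add_of_le' hn2
      exact exists_mem_Icc_sub_add_eq_nsmul hs hsub (hsp _ hn a)
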